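/- (Feasibility violation bound.) For every k ≥ 0 the iterates of the inexact primal–dual algorithm satisfy λ_k − λ₀ = β_k^{-1}(Hu_k − b) − (Hu₀ − b) + Σ_{i=0}^{k−1} E_i, where E_i := λ_{i+1} − λ_{i+1}^{#} + β_{i+1}^{-1} H (u_{i+1}^{#} − u_{i+1}) satisfies ‖E_i‖ ≤ ε_i (1 + α_i² β_i^{-2} ‖H‖²). Consequently, ‖Hu_k − b‖ ≤ β_k ( ‖Hu₀ − b‖ + ‖λ_k − λ₀‖ + Σ_{i=0}^{k−1} ε_i (1 + α_i² β_i^{-2} ‖H‖²) ), where β_k = ∏_{i=0}^{k−1} 1/(1+α_i). -/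

import Mathlib

open scoped RealInnerProductSpace
open Matrix Finset

/-- Index type for the primal variable `u = (x, y, z) ∈ ℝ^{mn} × ℝⁿ × ℝᵐ`. -/
abbrev PIdx (m n : ℕ) := Fin (m * n) ⊕ (Fin n ⊕ Fin m)

/-- The primal space `ℝ^{mn} × ℝⁿ × ℝᵐ` with the Euclidean norm. -/
abbrev PrimalSpace (m n : ℕ) := EuclideanSpace ℝ (PIdx m n)

/-- The dual (multiplier) space `ℝ^{m+n+r}` with the Euclidean norm. -/
abbrev DualSpace (m n r : ℕ) := EuclideanSpace ℝ (Fin (m + n + r))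

/-- Matrix-vector multiplication regarded as a map between Euclidean spaces. -/
noncomputable def mv {a b : Type*} [Fintype a] [Fintype b]
    (A : Matrix a b ℝ) (x : EuclideanSpace ℝ b) : EuclideanSpace ℝ a :=
  (WithLp.equiv 2 _).symm (A.mulVec ((WithLp.equiv 2 _) x))

/-- The spectral (operator `ℓ²`) norm of a real matrix. -/
noncomputable def specNorm {a b : Type*} [Fintype a] [Fintype b] [DecidableEq b]
    (A : Matrix a b ℝ) : ℝ :=
  ‖LinearMap.toContinuousLinearMap (Matrix.toEuclideanLin A)‖

/-- All data of the inexact primal-dual algorithm for the generalized transport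
problem `min h(x)` over `u = (x,y,z) ∈ Σ` s.t. `Hu = b`, together with the
produced iterates. -/
structure PDSetting (m n r : ℕ) where
  /-- the strong convexity parameter `σ ≥ 0` of `h` -/
  sigma : ℝ
  /-- the vector `φ` in `h(x) = (σ/2)‖x − φ‖² + cᵀx` -/
  phi : EuclideanSpace ℝ (Fin (m * n))
  /-- the cost vector `c` -/
  c : EuclideanSpace ℝ (Fin (m * n))
  /-- the constraint matrix `H` -/
  H : Matrix (Fin (m + n + r)) (PIdx m n) ℝ
  /-- the constraint right-hand side `b` -/
  b : DualSpace m n r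
  /-- the intervals whose product is the box `Σ` -/
  box : PIdx m n → Set ℝ
  /-- the Euclidean projection onto `Σ` -/
  proj : PrimalSpace m n → PrimalSpace m n
  /-- the step sizes `α_k > 0` -/
  alpha : ℕ → ℝ
  /-- the tolerances `ε_k > 0` -/
  eps : ℕ → ℝ
  /-- the primal iterates `u_k` -/
  u : ℕ → PrimalSpace m n
  /-- the auxiliary iterates `v_k` -/
  v : ℕ → PrimalSpace m n
  /-- the dual iterates `λ_k` -/
  lam : ℕ → DualSpace m n r
  /-- `lamS k` is the exact solution `λ_{k+1}^{#}`, the unique zero of `F_k` -/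
  lamS : ℕ → DualSpace m n r
  /-- a primal solution `u* = (x*, y*, z*)` -/
  ustar : PrimalSpace m n
  /-- a dual solution `λ*` -/
  lamstar : DualSpace m n r

/-- The `x`-component of a primal vector `u = (x,y,z)`. -/
noncomputable def xPart {m n : ℕ} (u : PrimalSpace m n) : EuclideanSpace ℝ (Fin (m * n)) :=
  (WithLp.equiv 2 _).symm fun i => u (Sum.inl i)

namespace PDSetting

variable {m n r : ℕ} (S : PDSetting m n r)

/-- `β_k = ∏_{i=0}^{k-1} 1/(1+α_i)`, i.e. `β₀ = 1`, `β_{k+1} = β_k/(1+α_k)`. -/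
noncomputable def beta (k : ℕ) : ℝ := ∏ i ∈ range k, (1 + S.alpha i)⁻¹

/-- `τ_k = β_k (1+α_k)/α_k²`. -/
noncomputable def tau (k : ℕ) : ℝ := S.beta k * (1 + S.alpha k) / (S.alpha k) ^ 2

/-- `η_k = σ + τ_k`. -/
noncomputable def eta (k : ℕ) : ℝ := S.sigma + S.tau k

/-- The diagonal of `D_k = diag(η_k I_{mn}, τ_k Iₙ, τ_k Iₘ)`. -/
noncomputable def dEntry (k : ℕ) : PIdx m n → ℝ :=
  Sum.elim (fun _ => S.eta k) (fun _ => S.tau k)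

/-- The matrix `D_k`. -/
noncomputable def Dmat (k : ℕ) : Matrix (PIdx m n) (PIdx m n) ℝ :=
  Matrix.diagonal (S.dEntry k)

/-- The objective `h(x) = (σ/2)‖x − φ‖² + cᵀx`, as a function of `u`. -/
noncomputable def hObj (u : PrimalSpace m n) : ℝ :=
  S.sigma / 2 * ‖xPart u - S.phi‖ ^ 2 + ⟪S.c, xPart u⟫

/-- The vector `c̃ = (σφ − c, 0ₙ, 0ₘ)`. -/
noncomputable def ctil : PrimalSpace m n :=
  (WithLp.equiv 2 _).symm (Sum.elim (fun i => S.sigma * S.phi i - S.c i) fun _ => 0)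

/-- The box `Σ = 𝒳 × 𝒴 × 𝒵`. -/
def SigmaSet : Set (PrimalSpace m n) := {u | ∀ i, u i ∈ S.box i}

/-- The Lagrangian `𝓛(u, λ) = h(x) + ⟨λ, Hu − b⟩` (for `u ∈ Σ`). -/
noncomputable def Lag (u : PrimalSpace m n) (lam : DualSpace m n r) : ℝ :=
  S.hObj u + ⟪lam, mv S.H u - S.b⟫

/-- `w_k = c̃ + β_k (u_k + α_k v_k)/α_k²`. -/
noncomputable def wk (k : ℕ) : PrimalSpace m n :=
  S.ctil + (S.beta k / (S.alpha k) ^ 2) • (S.u k + S.alpha k • S.v k)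

/-- `λ̃_k = β_{k+1} [λ_k − β_k⁻¹ (Hu_k − b)] − b`. -/
noncomputable def lamTil (k : ℕ) : DualSpace m n r :=
  S.beta (k + 1) • (S.lam k - (S.beta k)⁻¹ • (mv S.H (S.u k) - S.b)) - S.b

/-- `F_k(λ) = β_{k+1} λ − H proj_Σ(D_k⁻¹(w_k − Hᵀλ)) − λ̃_k`. -/
noncomputable def Fk (k : ℕ) (lam : DualSpace m n r) : DualSpace m n r :=
  S.beta (k + 1) • lam -
    mv S.H (S.proj (mv (S.Dmat k)⁻¹ (S.wk k - mv S.Hᵀ lam))) - S.lamTil k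

/-- `u_{k+1}^{#} = proj_Σ(D_k⁻¹(w_k − Hᵀ λ_{k+1}^{#}))`. -/
noncomputable def uS (k : ℕ) : PrimalSpace m n :=
  S.proj (mv (S.Dmat k)⁻¹ (S.wk k - mv S.Hᵀ (S.lamS k)))

/-- `v_{k+1}^{#} = u_{k+1}^{#} + (u_{k+1}^{#} − u_k)/α_k`. -/
noncomputable def vS (k : ℕ) : PrimalSpace m n :=
  S.uS k + (S.alpha k)⁻¹ • (S.uS k - S.u k)

/-- The discrete Lyapunov function
`𝓔(β,u,v,λ) = 𝓛(u,λ*) − 𝓛(u*,λ) + (β/2)(‖v − u*‖² + ‖λ − λ*‖²)`. -/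
noncomputable def Lyap (βv : ℝ) (u v : PrimalSpace m n) (lam : DualSpace m n r) : ℝ :=
  S.Lag u S.lamstar - S.Lag S.ustar lam +
    βv / 2 * (‖v - S.ustar‖ ^ 2 + ‖lam - S.lamstar‖ ^ 2)

/-- `𝓔_k`. -/
noncomputable def E (k : ℕ) : ℝ := S.Lyap (S.beta k) (S.u k) (S.v k) (S.lam k)

/-- `𝓔_{k+1}^{#}`, the Lyapunov function at the exact update of step `k`. -/
noncomputable def ESharp (k : ℕ) : ℝ :=
  S.Lyap (S.beta (k + 1)) (S.uS k) (S.vS k) (S.lamS k)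

/-- `ε̂_k = ∑_{i<k} ε_i α_i² β_i⁻²`. -/
noncomputable def epsHat (k : ℕ) : ℝ :=
  ∑ i ∈ range k, S.eps i * (S.alpha i) ^ 2 / (S.beta i) ^ 2

/-- `ε̃_k = ∑_{i<k} ε_i β_i^{-3/2} (α_i² + α_i √β_i + β_i^{3/2})`. -/
noncomputable def epsTil (k : ℕ) : ℝ :=
  ∑ i ∈ range k, S.eps i / (S.beta i) ^ ((3 : ℝ) / 2) *
    ((S.alpha i) ^ 2 + S.alpha i * Real.sqrt (S.beta i) + (S.beta i) ^ ((3 : ℝ) / 2))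

/-- `Z = ‖H‖(σ‖x*‖ + ‖Hᵀλ* − c̃‖)`. -/
noncomputable def Z : ℝ :=
  specNorm S.H * (S.sigma * ‖xPart S.ustar‖ + ‖mv S.Hᵀ S.lamstar - S.ctil‖)

/-- `Q = 1 + (1 + √σ)‖H‖`. -/
noncomputable def Q : ℝ := 1 + (1 + Real.sqrt S.sigma) * specNorm S.H

/-- All hypotheses of the inexact primal–dual algorithm: the box is a nonempty
closed product of intervals, `proj` is the nearest-point projection onto it,
`(u*, λ*)` is a saddle point, the iterates follow the algorithm with inexactness
`‖λ_{k+1} − λ_{k+1}^{#}‖ ≤ ε_k`, and the exact one-step contraction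
`𝓔_{k+1}^{#} − 𝓔_k ≤ −α_k 𝓔_{k+1}^{#}` holds. -/
structure IsValid : Prop where
  hsigma : 0 ≤ S.sigma
  hbox_ne : ∀ i, (S.box i).Nonempty
  hbox_cl : ∀ i, IsClosed (S.box i)
  hbox_int : ∀ i, (S.box i).OrdConnected
  hproj_mem : ∀ x, S.proj x ∈ S.SigmaSet
  hproj_near : ∀ x, ∀ y ∈ S.SigmaSet, dist x (S.proj x) ≤ dist x y
  halpha : ∀ k, 0 < S.alpha k
  heps : ∀ k, 0 < S.eps k
  hustar : S.ustar ∈ S.SigmaSet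
  hfeas : mv S.H S.ustar = S.b
  hsaddle : ∀ u ∈ S.SigmaSet, S.Lag S.ustar S.lamstar ≤ S.Lag u S.lamstar
  hu0 : S.u 0 ∈ S.SigmaSet
  hlamS : ∀ k, S.Fk k (S.lamS k) = 0
  hlam_err : ∀ k, ‖S.lam (k + 1) - S.lamS k‖ ≤ S.eps k
  hu_upd : ∀ k, S.u (k + 1) = S.proj (mv (S.Dmat k)⁻¹ (S.wk k - mv S.Hᵀ (S.lam (k + 1))))
  hv_upd : ∀ k, S.v (k + 1) = S.u (k + 1) + (S.alpha k)⁻¹ • (S.u (k + 1) - S.u k)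
  hcontract : ∀ k, S.ESharp k - S.E k ≤ -S.alpha k * S.ESharp k

end PDSetting

/-!
Under exact dual steps the quantity `λ_k − β_k⁻¹ (Hu_k − b)` would be invariant: the equation
`F_k(λ_{k+1}^{#}) = 0` says precisely that
`λ_{k+1}^{#} − λ_k = β_{k+1}⁻¹ (Hu_{k+1}^{#} − b) − β_k⁻¹ (Hu_k − b)`.
Each inexact step changes it by `E_k`, and summing these increments gives the identity.
The error `E_k` is small because the projection onto the convex box is nonexpansive and
`D_k ≥ τ_k`, so `‖u_{k+1}^{#} − u_{k+1}‖ ≤ τ_k⁻¹ ‖H‖ ε_k`, while `β_{k+1} τ_k = β_k² / α_k²`.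
-/

section MatrixVector

variable {a b : Type*} [Fintype a] [Fintype b] [DecidableEq b]

theorem mv_eq_toEuclideanLin (A : Matrix a b ℝ) (x : EuclideanSpace ℝ b) :
    mv A x = Matrix.toEuclideanLin A x := rfl

theorem mv_sub (A : Matrix a b ℝ) (x y : EuclideanSpace ℝ b) :
    mv A (x - y) = mv A x - mv A y := by
  simp only [mv_eq_toEuclideanLin, map_sub]

theorem norm_mv_le (A : Matrix a b ℝ) (x : EuclideanSpace ℝ b) :
    ‖mv A x‖ ≤ specNorm A * ‖x‖ :=
  (LinearMap.toContinuousLinearMap (Matrix.toEuclideanLin A)).le_opNorm x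

theorem specNorm_transpose [DecidableEq a] (A : Matrix a b ℝ) : specNorm Aᵀ = specNorm A := by
  rw [← Matrix.conjTranspose_eq_transpose_of_trivial, specNorm,
    Matrix.toEuclideanLin_conjTranspose_eq_adjoint, LinearMap.adjoint_toContinuousLinearMap]
  exact LinearIsometryEquiv.norm_map ContinuousLinearMap.adjoint _

theorem norm_mv_diagonal_le (d : b → ℝ) {c : ℝ} (hc : 0 ≤ c) (hd : ∀ i, |d i| ≤ c)
    (z : EuclideanSpace ℝ b) : ‖mv (Matrix.diagonal d) z‖ ≤ c * ‖z‖ := by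
  refine le_of_pow_le_pow_left₀ two_ne_zero (by positivity) ?_
  rw [mul_pow, EuclideanSpace.norm_sq_eq, EuclideanSpace.norm_sq_eq, Finset.mul_sum]
  refine Finset.sum_le_sum fun i _ => ?_
  have hdz : (mv (Matrix.diagonal d) z) i = d i * z i := by simp [mv, Matrix.mulVec_diagonal]
  rw [hdz, norm_mul, mul_pow, Real.norm_eq_abs, sq_abs]
  exact mul_le_mul_of_nonneg_right (sq_le_sq' (abs_le.1 (hd i)).1 (abs_le.1 (hd i)).2)
    (sq_nonneg _)

end MatrixVector

section NearestPoint

variable {F : Type*} [NormedAddCommGroup F] [InnerProductSpace ℝ F] {K : Set F}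

theorem real_inner_sub_nonpos_of_nearest (hK : Convex ℝ K) {u v : F} (hv : v ∈ K)
    (hmin : ∀ w ∈ K, dist u v ≤ dist u w) {w : F} (hw : w ∈ K) : ⟪u - v, w - v⟫ ≤ 0 := by
  have : Nonempty K := ⟨⟨v, hv⟩⟩
  refine (norm_eq_iInf_iff_real_inner_le_zero hK hv).1 ?_ w hw
  refine le_antisymm (le_ciInf fun w' => ?_)
    (ciInf_le (f := fun w' : K => ‖u - w'‖) ⟨0, ?_⟩ ⟨v, hv⟩)
  · simpa only [dist_eq_norm] using hmin w' w'.2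
  · rintro _ ⟨w', rfl⟩
    exact norm_nonneg _

theorem norm_sub_le_of_nearest (hK : Convex ℝ K) {p : F → F} (hmem : ∀ x, p x ∈ K)
    (hnear : ∀ x, ∀ y ∈ K, dist x (p x) ≤ dist x y) (x y : F) :
    ‖p x - p y‖ ≤ ‖x - y‖ := by
  have hx := real_inner_sub_nonpos_of_nearest hK (hmem x) (hnear x) (hmem y)
  have hy := real_inner_sub_nonpos_of_nearest hK (hmem y) (hnear y) (hmem x)
  have hsq : ‖p x - p y‖ ^ 2 ≤ ‖x - y‖ * ‖p x - p y‖ :=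
    calc ‖p x - p y‖ ^ 2 ≤ ⟪x - y, p x - p y⟫ := by
          rw [← real_inner_self_eq_norm_sq]
          have : ⟪x - y, p x - p y⟫ - ⟪p x - p y, p x - p y⟫ =
              -(⟪x - p x, p y - p x⟫ + ⟪y - p y, p x - p y⟫) := by
            simp only [inner_sub_left, inner_sub_right, real_inner_comm]
            ring
          linarith
      _ ≤ ‖x - y‖ * ‖p x - p y‖ := real_inner_le_norm _ _
  nlinarith [norm_nonneg (p x - p y), norm_nonneg (x - y)]

end NearestPoint

namespace PDSetting

variable {m n r : ℕ} (S : PDSetting m n r)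

/-- The error `E_i` of the paper. -/
noncomputable def inexactErr (i : ℕ) : DualSpace m n r :=
  S.lam (i + 1) - S.lamS i + (S.beta (i + 1))⁻¹ • mv S.H (S.uS i - S.u (i + 1))

noncomputable def scaledResidual (k : ℕ) : DualSpace m n r :=
  (S.beta k)⁻¹ • (mv S.H (S.u k) - S.b)

variable {S}

theorem beta_zero : S.beta 0 = 1 := by simp [beta]

theorem beta_succ (k : ℕ) : S.beta (k + 1) = S.beta k * (1 + S.alpha k)⁻¹ :=
  Finset.prod_range_succ _ _

theorem beta_pos (hα : ∀ i, 0 < S.alpha i) (k : ℕ) : 0 < S.beta k :=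
  Finset.prod_pos fun i _ => inv_pos.2 (by linarith [hα i])

theorem beta_succ_mul_tau {k : ℕ} (hα : 0 < S.alpha k) :
    S.beta (k + 1) * S.tau k = S.beta k ^ 2 / S.alpha k ^ 2 := by
  have : 1 + S.alpha k ≠ 0 := by positivity
  rw [beta_succ, tau]
  field_simp

theorem scaledResidual_zero : S.scaledResidual 0 = mv S.H (S.u 0) - S.b := by
  rw [scaledResidual, beta_zero, inv_one, one_smul]

theorem lamS_sub_lam (hS : S.IsValid) (k : ℕ) :
    S.lamS k - S.lam k =
      (S.beta (k + 1))⁻¹ • (mv S.H (S.uS k) - S.b) - S.scaledResidual k := by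
  have hβ : S.beta (k + 1) ≠ 0 := (beta_pos hS.halpha (k + 1)).ne'
  have hF := hS.hlamS k
  rw [Fk, lamTil, ← uS, sub_sub, sub_eq_zero] at hF
  apply smul_right_injective (DualSpace m n r) hβ
  simp only [scaledResidual, smul_sub, smul_smul, mul_inv_cancel₀ hβ, one_smul, hF]
  abel

theorem inexactErr_eq (hS : S.IsValid) (k : ℕ) :
    S.inexactErr k =
      (S.lam (k + 1) - S.scaledResidual (k + 1)) - (S.lam k - S.scaledResidual k) := by
  have h := lamS_sub_lam hS k
  rw [sub_eq_iff_eq_add] at h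
  rw [inexactErr, mv_sub, h]
  simp only [scaledResidual, smul_sub]
  abel

theorem lam_sub_lam_zero (hS : S.IsValid) (k : ℕ) :
    S.lam k - S.lam 0 =
      S.scaledResidual k - (mv S.H (S.u 0) - S.b) + ∑ i ∈ Finset.range k, S.inexactErr i := by
  rw [Finset.sum_congr rfl fun i _ => inexactErr_eq hS i, Finset.sum_range_sub
    (fun i => S.lam i - S.scaledResidual i), scaledResidual_zero]
  abel

theorem norm_mv_Dmat_inv_le (hσ : 0 ≤ S.sigma) {k : ℕ} (hτ : 0 < S.tau k)
    (z : PrimalSpace m n) : ‖mv (S.Dmat k)⁻¹ z‖ ≤ (S.tau k)⁻¹ * ‖z‖ := by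
  have hτ_le : ∀ j, S.tau k ≤ S.dEntry k j := by
    rintro (j | j)
    · simp only [dEntry, eta, Sum.elim_inl]
      linarith
    · simp [dEntry]
  have hd : ∀ j, S.dEntry k j ≠ 0 := fun j => (hτ.trans_le (hτ_le j)).ne'
  have hinv : (S.Dmat k)⁻¹ = Matrix.diagonal (S.dEntry k)⁻¹ := by
    refine Matrix.inv_eq_left_inv ?_
    rw [Dmat, Matrix.diagonal_mul_diagonal, ← Matrix.diagonal_one]
    exact congrArg Matrix.diagonal (funext fun j => inv_mul_cancel₀ (hd j))
  rw [hinv]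
  refine norm_mv_diagonal_le (S.dEntry k)⁻¹ (inv_pos.2 hτ).le (fun j => ?_) z
  rw [Pi.inv_apply, abs_of_pos (inv_pos.2 (hτ.trans_le (hτ_le j)))]
  exact inv_anti₀ hτ (hτ_le j)

theorem norm_uS_sub_u_succ_le (hS : S.IsValid) (k : ℕ) :
    ‖S.uS k - S.u (k + 1)‖ ≤ (S.tau k)⁻¹ * (specNorm S.H * S.eps k) := by
  have hτ : 0 < S.tau k := by
    have := beta_pos hS.halpha k
    have := hS.halpha k
    unfold tau
    positivity
  have hconv : Convex ℝ S.SigmaSet := fun x hx y hy p q hp hq hpq i =>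
    (hS.hbox_int i).convex (hx i) (hy i) hp hq hpq
  rw [uS, hS.hu_upd k]
  calc _ ≤ ‖mv (S.Dmat k)⁻¹ (S.wk k - mv S.Hᵀ (S.lamS k)) -
          mv (S.Dmat k)⁻¹ (S.wk k - mv S.Hᵀ (S.lam (k + 1)))‖ :=
        norm_sub_le_of_nearest hconv hS.hproj_mem hS.hproj_near _ _
    _ = ‖mv (S.Dmat k)⁻¹ (mv S.Hᵀ (S.lam (k + 1) - S.lamS k))‖ := by
        rw [← mv_sub, mv_sub S.Hᵀ, sub_sub_sub_cancel_left]
    _ ≤ (S.tau k)⁻¹ * (specNorm S.H * S.eps k) := by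
        refine (norm_mv_Dmat_inv_le hS.hsigma hτ _).trans ?_
        gcongr
        refine (norm_mv_le _ _).trans ?_
        rw [specNorm_transpose]
        exact mul_le_mul_of_nonneg_left (hS.hlam_err k) (norm_nonneg _)

theorem norm_inexactErr_le (hS : S.IsValid) (i : ℕ) :
    ‖S.inexactErr i‖ ≤ S.eps i * (1 + S.alpha i ^ 2 / S.beta i ^ 2 * specNorm S.H ^ 2) := by
  have hβ := beta_pos hS.halpha (i + 1)
  have hprimal : ‖(S.beta (i + 1))⁻¹ • mv S.H (S.uS i - S.u (i + 1))‖ ≤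
      S.eps i * (S.alpha i ^ 2 / S.beta i ^ 2 * specNorm S.H ^ 2) :=
    calc _ ≤ (S.beta (i + 1))⁻¹ * (specNorm S.H * ((S.tau i)⁻¹ * (specNorm S.H * S.eps i))) := by
          rw [norm_smul, Real.norm_of_nonneg (inv_pos.2 hβ).le]
          gcongr
          exact (norm_mv_le _ _).trans
            (mul_le_mul_of_nonneg_left (norm_uS_sub_u_succ_le hS i) (norm_nonneg _))
      _ = S.eps i * specNorm S.H ^ 2 / (S.beta (i + 1) * S.tau i) := by
          field_simp
      _ = _ := by
          rw [beta_succ_mul_tau (hS.halpha i)]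
          field_simp
  calc ‖S.inexactErr i‖
      ≤ ‖S.lam (i + 1) - S.lamS i‖ + ‖(S.beta (i + 1))⁻¹ • mv S.H (S.uS i - S.u (i + 1))‖ :=
        norm_add_le _ _
    _ ≤ S.eps i + S.eps i * (S.alpha i ^ 2 / S.beta i ^ 2 * specNorm S.H ^ 2) :=
        add_le_add (hS.hlam_err i) hprimal
    _ = S.eps i * (1 + S.alpha i ^ 2 / S.beta i ^ 2 * specNorm S.H ^ 2) := by ring

theorem norm_residual_le (hS : S.IsValid) (k : ℕ) :
    ‖mv S.H (S.u k) - S.b‖ ≤ S.beta k * (‖mv S.H (S.u 0) - S.b‖ + ‖S.lam k - S.lam 0‖ +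
      ∑ i ∈ Finset.range k,
        S.eps i * (1 + S.alpha i ^ 2 / S.beta i ^ 2 * specNorm S.H ^ 2)) := by
  have hβ := beta_pos hS.halpha k
  have hres : mv S.H (S.u k) - S.b = S.beta k • S.scaledResidual k := by
    rw [scaledResidual, smul_smul, mul_inv_cancel₀ hβ.ne', one_smul]
  have hscaled : S.scaledResidual k = (mv S.H (S.u 0) - S.b) + (S.lam k - S.lam 0) -
      ∑ i ∈ Finset.range k, S.inexactErr i := by
    rw [lam_sub_lam_zero hS k]
    abel
  rw [hres, norm_smul, Real.norm_of_nonneg hβ.le, hscaled]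
  gcongr
  refine (norm_sub_le _ _).trans (add_le_add (norm_add_le _ _) ?_)
  exact (norm_sum_le _ _).trans (Finset.sum_le_sum fun i _ => norm_inexactErr_le hS i)

end PDSetting

/-- feasibility violation bound. -/
theorem stmt4 {m n r : ℕ} (S : PDSetting m n r) (hS : S.IsValid) (k : ℕ) :
    S.lam k - S.lam 0 =
        (S.beta k)⁻¹ • (mv S.H (S.u k) - S.b) - (mv S.H (S.u 0) - S.b) +
          ∑ i ∈ Finset.range k,
            (S.lam (i + 1) - S.lamS i + (S.beta (i + 1))⁻¹ • mv S.H (S.uS i - S.u (i + 1))) ∧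
      (∀ i, ‖S.lam (i + 1) - S.lamS i + (S.beta (i + 1))⁻¹ • mv S.H (S.uS i - S.u (i + 1))‖
          ≤ S.eps i * (1 + (S.alpha i) ^ 2 / (S.beta i) ^ 2 * specNorm S.H ^ 2)) ∧
      ‖mv S.H (S.u k) - S.b‖ ≤ S.beta k *
        (‖mv S.H (S.u 0) - S.b‖ + ‖S.lam k - S.lam 0‖ +
          ∑ i ∈ Finset.range k,
            S.eps i * (1 + (S.alpha i) ^ 2 / (S.beta i) ^ 2 * specNorm S.H ^ 2)) :=
  ⟨PDSetting.lam_sub_lam_zero hS k, PDSetting.norm_inexactErr_le hS,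
    PDSetting.norm_residual_le hS k⟩
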